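/- arXiv:2410.08039 — 4 statements merged into one kernel-verified Lean document; each statement's English description precedes it below -/
import Mathlib

section
/- Let N ≥ 1, 1 < p ≤ q < ∞, and let g, h : ℝ^N → (0,∞) be measurable functions, positive almost everywhere, with g ∈ L¹(ℝ^N \ {0}) and h^{1−p'} ∈ L¹_loc(ℝ^N). Define G(x) = ∫_{ℝ^N \ B(0,|x|)} g(y) dy and H(x) = ∫_{B(0,|x|)} h(y)^{1−p'} dy. If there is a constant C_H > 0 such that ( ∫_{ℝ^N} ( ∫_{B(0,|x|)} |f(y)| dy )^q g(x) dx )^{1/q} ≤ C_H ( ∫_{ℝ^N} |f(x)|^p h(x) dx )^{1/p} holds for all measurable f : ℝ^N → ℂ, then D₁ := sup_{x ≠ 0} G(x)^{1/q} H(x)^{1/p'} ≤ C_H; in particular D₁ < ∞. -/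
/-! Test the inequality on `f = h ^ (1 - p') · 𝟙_{B(0, ‖x‖)}`. For `‖y‖ ≥ ‖x‖` the integral of
`|f|` over `B(0, ‖y‖)` is at least `H x`, so the left side is at least `H x · G x ^ (1/q)`; since
`(1 - p') p + 1 = 1 - p'`, the right side is `C_H · H x ^ (1/p)`. Dividing by `H x ^ (1/p)`, finite
by local integrability, and using `1/p + 1/p' = 1` gives `G x ^ (1/q) · H x ^ (1/p') ≤ C_H`. -/

open MeasureTheory Metric ENNReal

lemma Real.HolderConjugate.rpow_one_sub_rpow_mul_self {p p' : ℝ} (hpp' : p.HolderConjugate p')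
    {t : ℝ} (ht : 0 < t) : (t ^ (1 - p')) ^ p * t = t ^ (1 - p') := by
  rw [← Real.rpow_mul ht.le, ← Real.rpow_add_one ht.ne']
  congr 1
  linarith [hpp'.mul_eq_add]

lemma ENNReal.rpow_mul_rpow_le_of_mul_le_mul_rpow {p p' : ℝ} (hpp' : p.HolderConjugate p')
    {A G C : ℝ≥0∞} (hA : A ≠ ∞) (h : A * G ≤ C * A ^ (1 / p)) : G * A ^ (1 / p') ≤ C := by
  rcases eq_or_ne A 0 with rfl | hA0
  · rw [ENNReal.zero_rpow_of_pos hpp'.symm.one_div_pos, mul_zero]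
    exact zero_le
  have hAp0 : A ^ (1 / p) ≠ 0 := by simp [ENNReal.rpow_eq_zero_iff, hA0, hA]
  have hApt : A ^ (1 / p) ≠ ∞ := ENNReal.rpow_ne_top_of_nonneg hpp'.one_div_nonneg hA
  rw [← ENNReal.mul_le_mul_iff_left hAp0 hApt]
  calc G * A ^ (1 / p') * A ^ (1 / p) = A * G := by
        rw [mul_assoc, ← ENNReal.rpow_add _ _ hA0 hA, add_comm, hpp'.one_div_add_one_div,
          div_one, ENNReal.rpow_one, mul_comm]
    _ ≤ C * A ^ (1 / p) := h

section TestFunction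

variable {α : Type*} [MeasurableSpace α] {μ : Measure α} {B : Set α} {w : α → ℝ}

lemma ofReal_norm_indicator_ae_eq (hw : ∀ᵐ y ∂μ, 0 ≤ w y) :
    (fun y => ENNReal.ofReal ‖((B.indicator w y : ℝ) : ℂ)‖)
      =ᵐ[μ] B.indicator (fun y => ENNReal.ofReal (w y)) := by
  filter_upwards [hw] with y hy
  by_cases hyB : y ∈ B <;> simp [hyB, abs_of_nonneg hy]

lemma setLIntegral_ofReal_norm_indicator (hB : MeasurableSet B) (hw : ∀ᵐ y ∂μ, 0 ≤ w y) :
    ∫⁻ y in B, ENNReal.ofReal ‖((B.indicator w y : ℝ) : ℂ)‖ ∂μ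
      = ∫⁻ y in B, ENNReal.ofReal (w y) ∂μ := by
  rw [lintegral_congr_ae (ae_restrict_of_ae (ofReal_norm_indicator_ae_eq hw))]
  exact setLIntegral_congr_fun hB fun y hy => Set.indicator_of_mem hy _

lemma lintegral_ofReal_norm_indicator_rpow_mul {p p' : ℝ} (hpp' : p.HolderConjugate p')
    {h : α → ℝ} (hh : ∀ᵐ y ∂μ, 0 < h y) (hB : MeasurableSet B) :
    ∫⁻ y, ENNReal.ofReal ‖((B.indicator (fun y => h y ^ (1 - p')) y : ℝ) : ℂ)‖ ^ p
        * ENNReal.ofReal (h y) ∂μ = ∫⁻ y in B, ENNReal.ofReal (h y ^ (1 - p')) ∂μ := by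
  have hw : ∀ᵐ y ∂μ, 0 ≤ h y ^ (1 - p') := hh.mono fun y hy => Real.rpow_nonneg hy.le _
  rw [← lintegral_indicator hB]
  refine lintegral_congr_ae ?_
  filter_upwards [ofReal_norm_indicator_ae_eq hw, hh] with y hy hpos
  rw [hy]
  by_cases hyB : y ∈ B
  · simp only [Set.indicator_of_mem hyB]
    rw [ENNReal.ofReal_rpow_of_nonneg (Real.rpow_nonneg hpos.le _) hpp'.nonneg,
      ← ENNReal.ofReal_mul (Real.rpow_nonneg (Real.rpow_nonneg hpos.le _) _),
      hpp'.rpow_one_sub_rpow_mul_self hpos]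
  · simp [hyB, ENNReal.zero_rpow_of_pos hpp'.pos]

end TestFunction

lemma setLIntegral_ball_mul_rpow_le {E : Type*} [SeminormedAddCommGroup E]
    [MeasurableSpace E] [OpensMeasurableSpace E] {μ : Measure E} (F g : E → ℝ≥0∞)
    {q : ℝ} (hq : 0 < q) (r : ℝ) :
    (∫⁻ y in ball 0 r, F y ∂μ) * (∫⁻ x in (ball 0 r)ᶜ, g x ∂μ) ^ (1 / q)
      ≤ (∫⁻ x, (∫⁻ y in ball 0 ‖x‖, F y ∂μ) ^ q * g x ∂μ) ^ (1 / q) := by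
  rw [← ENNReal.rpow_rpow_inv hq.ne' (∫⁻ y in ball 0 r, F y ∂μ), one_div,
    ← ENNReal.mul_rpow_of_nonneg _ _ (inv_nonneg.2 hq.le)]
  gcongr
  refine (lintegral_const_mul_le _ _).trans <|
    le_trans ?_ (setLIntegral_le_lintegral (ball 0 r)ᶜ _)
  refine setLIntegral_mono' measurableSet_ball.compl fun x hx => ?_
  have hr : r ≤ ‖x‖ := by simpa using hx
  gcongr

theorem integral_hardy_inequality_necessity_general
    (N : ℕ) (p q p' : ℝ) (hp : 1 < p) (hpq : p ≤ q)
    (hp' : p' = p / (p - 1))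
    (g h : EuclideanSpace ℝ (Fin N) → ℝ)
    (hh_meas : Measurable h)
    (hh_pos : ∀ᵐ x, 0 < h x)
    (hh_loc : LocallyIntegrable (fun y => h y ^ (1 - p')) volume)
    (G H : EuclideanSpace ℝ (Fin N) → ℝ≥0∞)
    (hG : ∀ x, G x = ∫⁻ y in (ball (0 : EuclideanSpace ℝ (Fin N)) ‖x‖)ᶜ,
        ENNReal.ofReal (g y))
    (hH : ∀ x, H x = ∫⁻ y in ball (0 : EuclideanSpace ℝ (Fin N)) ‖x‖,
        ENNReal.ofReal (h y ^ (1 - p')))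
    (C_H : ℝ)
    (hineq : ∀ f : EuclideanSpace ℝ (Fin N) → ℂ, Measurable f →
      (∫⁻ x, (∫⁻ y in ball (0 : EuclideanSpace ℝ (Fin N)) ‖x‖,
            ENNReal.ofReal ‖f y‖) ^ q * ENNReal.ofReal (g x)) ^ (1 / q)
        ≤ ENNReal.ofReal C_H *
          (∫⁻ x, ENNReal.ofReal ‖f x‖ ^ p * ENNReal.ofReal (h x)) ^ (1 / p)) :
    (⨆ x : {x : EuclideanSpace ℝ (Fin N) // x ≠ 0},
        G x.1 ^ (1 / q) * H x.1 ^ (1 / p')) ≤ ENNReal.ofReal C_H ∧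
    (⨆ x : {x : EuclideanSpace ℝ (Fin N) // x ≠ 0},
        G x.1 ^ (1 / q) * H x.1 ^ (1 / p')) < ∞ := by
  have hq : 0 < q := by linarith
  have hpp' : p.HolderConjugate p' := (Real.holderConjugate_iff_eq_conjExponent hp).2 hp'
  have key : ∀ x, G x ^ (1 / q) * H x ^ (1 / p') ≤ ENNReal.ofReal C_H := by
    intro x
    set B := ball (0 : EuclideanSpace ℝ (Fin N)) ‖x‖
    have hw : ∀ᵐ y, 0 ≤ h y ^ (1 - p') := hh_pos.mono fun y hy => Real.rpow_nonneg hy.le _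
    set f : EuclideanSpace ℝ (Fin N) → ℂ :=
      fun y => ((B.indicator (fun y => h y ^ (1 - p')) y : ℝ) : ℂ)
    have hf : Measurable f :=
      Complex.measurable_ofReal.comp ((hh_meas.pow_const _).indicator measurableSet_ball)
    have hf_inner : ∫⁻ y in B, ENNReal.ofReal ‖f y‖ = H x :=
      (setLIntegral_ofReal_norm_indicator measurableSet_ball hw).trans (hH x).symm
    have hf_norm : ∫⁻ y, ENNReal.ofReal ‖f y‖ ^ p * ENNReal.ofReal (h y) = H x :=
      (lintegral_ofReal_norm_indicator_rpow_mul hpp' hh_pos measurableSet_ball).trans (hH x).symm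
    have hH_fin : H x ≠ ∞ := by
      rw [hH]
      exact ((hh_loc.integrableOn_isCompact (isCompact_closedBall 0 ‖x‖)).mono_set
        ball_subset_closedBall).lintegral_lt_top.ne
    refine ENNReal.rpow_mul_rpow_le_of_mul_le_mul_rpow hpp' hH_fin ?_
    calc H x * G x ^ (1 / q)
        = (∫⁻ y in B, ENNReal.ofReal ‖f y‖) * (∫⁻ y in Bᶜ, ENNReal.ofReal (g y)) ^ (1 / q) := by
          rw [hf_inner, hG]
      _ ≤ (∫⁻ y, (∫⁻ z in ball 0 ‖y‖, ENNReal.ofReal ‖f z‖) ^ q * ENNReal.ofReal (g y)) ^ (1 / q) :=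
          setLIntegral_ball_mul_rpow_le _ _ hq _
      _ ≤ ENNReal.ofReal C_H * (∫⁻ y, ENNReal.ofReal ‖f y‖ ^ p * ENNReal.ofReal (h y)) ^ (1 / p) :=
          hineq f hf
      _ = ENNReal.ofReal C_H * H x ^ (1 / p) := by rw [hf_norm]
  have hsup := iSup_le fun x : {x : EuclideanSpace ℝ (Fin N) // x ≠ 0} => key x.1
  exact ⟨hsup, hsup.trans_lt ofReal_lt_top⟩

/-- necessity part of the integral Hardy inequality on ℝ^N
(Euclidean case of homogeneous Lie groups, Q = N). -/
theorem integral_hardy_inequality_necessity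
    (N : ℕ) (hN : 1 ≤ N) (p q p' : ℝ) (hp : 1 < p) (hpq : p ≤ q)
    (hp' : p' = p / (p - 1))
    (g h : EuclideanSpace ℝ (Fin N) → ℝ)
    (hg_meas : Measurable g) (hh_meas : Measurable h)
    (hg_pos : ∀ᵐ x, 0 < g x) (hh_pos : ∀ᵐ x, 0 < h x)
    (hg_int : IntegrableOn g ({0}ᶜ) volume)
    (hh_loc : LocallyIntegrable (fun y => h y ^ (1 - p')) volume)
    (G H : EuclideanSpace ℝ (Fin N) → ℝ≥0∞)
    (hG : ∀ x, G x = ∫⁻ y in (ball (0 : EuclideanSpace ℝ (Fin N)) ‖x‖)ᶜ,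
        ENNReal.ofReal (g y))
    (hH : ∀ x, H x = ∫⁻ y in ball (0 : EuclideanSpace ℝ (Fin N)) ‖x‖,
        ENNReal.ofReal (h y ^ (1 - p')))
    (C_H : ℝ) (hC_H : 0 < C_H)
    (hineq : ∀ f : EuclideanSpace ℝ (Fin N) → ℂ, Measurable f →
      (∫⁻ x, (∫⁻ y in ball (0 : EuclideanSpace ℝ (Fin N)) ‖x‖,
            ENNReal.ofReal ‖f y‖) ^ q * ENNReal.ofReal (g x)) ^ (1 / q)
        ≤ ENNReal.ofReal C_H *
          (∫⁻ x, ENNReal.ofReal ‖f x‖ ^ p * ENNReal.ofReal (h x)) ^ (1 / p)) :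
    (⨆ x : {x : EuclideanSpace ℝ (Fin N) // x ≠ 0},
        G x.1 ^ (1 / q) * H x.1 ^ (1 / p')) ≤ ENNReal.ofReal C_H ∧
    (⨆ x : {x : EuclideanSpace ℝ (Fin N) // x ≠ 0},
        G x.1 ^ (1 / q) * H x.1 ^ (1 / p')) < ∞ :=
  integral_hardy_inequality_necessity_general N p q p' hp hpq hp' g h hh_meas hh_pos hh_loc G H hG
    hH C_H hineq
end

section
/- Let N ≥ 1, p > 1, s > 0 with sp > N, and let p' = p/(p−1). Then sup_{x ≠ 0} [ ( ∫_{ℝ^N \ B(0,|x|)} dy / ( |B(0,|y|)|^p |y|^{sp} ) )^{1/p} ( ∫_{B(0,|x|)} |y|^{sp'} dy )^{1/p'} ] = N (p−1)^{1/p'} / ( sp + Np − N ); in particular, multiplying this quantity by (p')^{1/p'} p^{1/p} gives Np / (sp + Np − N), which is strictly less than 1. -/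
/-!
Both integrals are radial. In polar coordinates, with `v = μ (B(0,1))` and `μ (B(0,t)) = v tᴺ`,
the first one equals `v^(1-p) N r^(-T) / T` and the second `N v r^(N+sp') / (N+sp')`, where
`r = |x|` and `T = sp + Np - N = (p - 1)(N + sp')`. In the product of their `1/p`-th and
`1/p'`-th powers the dependence on `v` and `r` cancels, so the supremand does not depend on `x`.
-/

open Set Metric MeasureTheory Module
open scoped ENNReal

theorem lintegral_Ioo_rpow {q r : ℝ} (hq : -1 < q) (hr : 0 ≤ r) :
    ∫⁻ t in Ioo 0 r, ENNReal.ofReal (t ^ q) = ENNReal.ofReal (r ^ (q + 1) / (q + 1)) := by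
  have hint : IntegrableOn (fun t : ℝ ↦ t ^ q) (Ioc 0 r) :=
    (intervalIntegral.intervalIntegrable_rpow' hq).1
  rw [setLIntegral_congr Ioo_ae_eq_Ioc, ← ofReal_integral_eq_lintegral_ofReal hint
      ((ae_restrict_iff' measurableSet_Ioc).2 (.of_forall fun t ht ↦ by positivity [ht.1])),
    ← intervalIntegral.integral_of_le hr, integral_rpow (.inl hq),
    Real.zero_rpow (by linarith), sub_zero]

theorem lintegral_Ici_rpow {a r : ℝ} (ha : a < -1) (hr : 0 < r) :
    ∫⁻ t in Ici r, ENNReal.ofReal (t ^ a) = ENNReal.ofReal (-r ^ (a + 1) / (a + 1)) := by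
  rw [setLIntegral_congr Ioi_ae_eq_Ici.symm, ← integral_Ioi_rpow_of_lt ha hr,
    ofReal_integral_eq_lintegral_ofReal (integrableOn_Ioi_rpow_of_lt ha hr)
      ((ae_restrict_iff' measurableSet_Ioi).2 (.of_forall fun t ht ↦
        by positivity [hr.trans ht]))]

theorem Real.HolderConjugate.sub_one_rpow_mul_rpow_mul_rpow {p q : ℝ} (h : p.HolderConjugate q) :
    (p - 1) ^ (1 / q) * (q ^ (1 / q) * p ^ (1 / p)) = p := by
  rw [← mul_assoc, ← Real.mul_rpow h.sub_one_pos.le h.symm.nonneg, h.sub_one_mul_conj,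
    ← Real.rpow_add h.pos, add_comm, h.one_div_add_one_div, div_one, Real.rpow_one]

-- The powers of `v` and `r` cancel: their exponents are `(1 - p)/p + (p - 1)/p` and `-T/p + T/p`.
theorem hardy_radial_product_eq {n v r p T : ℝ} (hn : 0 < n) (hv : 0 < v) (hr : 0 < r)
    (hp : 1 < p) (hT : 0 < T) :
    (v ^ (-p) * (n * v * (r ^ (-T) / T))) ^ (1 / p) *
        (n * v * (r ^ (T / (p - 1)) / (T / (p - 1)))) ^ ((p - 1) / p) =
      n * (p - 1) ^ ((p - 1) / p) / T := by
  have hp1 : 0 < p - 1 := sub_pos.2 hp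
  refine Real.log_injOn_pos (mem_Ioi.2 (by positivity)) (mem_Ioi.2 (by positivity)) ?_
  simp (disch := positivity) only [Real.log_mul, Real.log_div, Real.log_rpow]
  field_simp
  ring

section HaarMeasure

variable {E : Type*} [NormedAddCommGroup E] [NormedSpace ℝ E] [MeasurableSpace E] [BorelSpace E]
  [FiniteDimensional ℝ E] (μ : Measure E) [μ.IsAddHaarMeasure]

local notation "dim" => finrank ℝ

omit [BorelSpace E] in
theorem measureReal_ball_pos (x : E) {r : ℝ} (hr : 0 < r) : 0 < μ.real (ball x r) :=
  ENNReal.toReal_pos (measure_ball_pos μ x hr).ne' measure_ball_lt_top.ne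

theorem one_div_measure_ball_rpow_mul_rpow {t : ℝ} (ht : 0 < t) (p q : ℝ) :
    1 / (μ (ball 0 t) ^ p * ENNReal.ofReal t ^ q) =
      ENNReal.ofReal (μ.real (ball 0 1) ^ (-p) * t ^ (-(dim E * p + q))) := by
  have hv := measureReal_ball_pos μ (0 : E) one_pos
  rw [Measure.addHaar_ball_of_pos μ 0 ht, ← ofReal_measureReal (s := ball 0 1),
    ← ENNReal.ofReal_mul (by positivity), ENNReal.ofReal_rpow_of_pos (by positivity),
    ENNReal.ofReal_rpow_of_pos ht, ← ENNReal.ofReal_mul (by positivity), one_div,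
    ← ENNReal.ofReal_inv_of_pos (by positivity)]
  congr 1
  rw [Real.mul_rpow (by positivity) hv.le, ← Real.rpow_natCast, ← Real.rpow_mul ht.le,
    Real.rpow_neg hv.le, Real.rpow_neg ht.le, Real.rpow_add ht]
  ring

variable [Nontrivial E]

theorem lintegral_fun_norm_addHaar (f : ℝ → ℝ≥0∞) (hf : Measurable f) :
    ∫⁻ x, f ‖x‖ ∂μ = dim E * μ (ball 0 1) *
      ∫⁻ t in Ioi (0 : ℝ), ENNReal.ofReal (t ^ (dim E - 1)) * f t := by
  have hf' : Measurable fun x : sphere (0 : E) 1 × Ioi (0 : ℝ) ↦ f x.2 :=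
    hf.comp (measurable_subtype_coe.comp measurable_snd)
  calc
    ∫⁻ x, f ‖x‖ ∂μ = ∫⁻ x : ({(0)}ᶜ : Set E), f ‖x.1‖ ∂(μ.comap (↑)) := by
      rw [lintegral_subtype_comap (measurableSet_singleton _).compl fun x ↦ f ‖x‖,
        restrict_compl_singleton]
    _ = ∫⁻ x, f x.2 ∂μ.toSphere.prod (.volumeIoiPow (dim E - 1)) := by
      rw [← μ.measurePreserving_homeomorphUnitSphereProd.lintegral_comp hf']
      simp
    _ = μ.toSphere univ * ∫⁻ t : Ioi (0 : ℝ), f t ∂.volumeIoiPow (dim E - 1) := by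
      rw [lintegral_prod _ hf'.aemeasurable]
      simp [lintegral_const, mul_comm]
    _ = _ := by
      rw [μ.toSphere_apply_univ, Measure.volumeIoiPow,
        lintegral_withDensity_eq_lintegral_mul _
          (measurable_subtype_coe.pow_const _).ennreal_ofReal
          (g := fun t : Ioi (0 : ℝ) ↦ f t) (hf.comp measurable_subtype_coe),
        mul_assoc]
      simp only [Pi.mul_apply]
      rw [lintegral_subtype_comap measurableSet_Ioi
        fun t ↦ ENNReal.ofReal (t ^ (dim E - 1)) * f t, mul_assoc]

theorem setLIntegral_fun_norm_addHaar (f : ℝ → ℝ≥0∞) (hf : Measurable f) {S : Set ℝ}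
    (hS : MeasurableSet S) :
    ∫⁻ x in (‖·‖) ⁻¹' S, f ‖x‖ ∂μ = dim E * μ (ball 0 1) *
      ∫⁻ t in S ∩ Ioi 0, ENNReal.ofReal (t ^ (dim E - 1)) * f t := by
  calc
    ∫⁻ x in (‖·‖) ⁻¹' S, f ‖x‖ ∂μ = ∫⁻ x, S.indicator f ‖x‖ ∂μ := by
      rw [← lintegral_indicator (hS.preimage measurable_norm)]
      exact lintegral_congr fun x ↦ indicator_comp_right (‖·‖)
    _ = _ := by
      rw [lintegral_fun_norm_addHaar μ _ (hf.indicator hS)]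
      simp_rw [← indicator_mul_right S (fun t ↦ ENNReal.ofReal (t ^ (dim E - 1))) f]
      rw [lintegral_indicator hS, Measure.restrict_restrict hS]

theorem setLIntegral_norm_rpow_addHaar (a : ℝ) {S : Set ℝ} (hS : MeasurableSet S) :
    ∫⁻ x in (‖·‖) ⁻¹' S, ENNReal.ofReal (‖x‖ ^ a) ∂μ =
      ENNReal.ofReal (dim E * μ.real (ball 0 1)) *
        ∫⁻ t in S ∩ Ioi 0, ENNReal.ofReal (t ^ ((dim E : ℝ) - 1 + a)) := by
  have hdim : 1 ≤ dim E := finrank_pos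
  rw [setLIntegral_fun_norm_addHaar μ (fun t ↦ ENNReal.ofReal (t ^ a)) (by fun_prop) hS,
    ENNReal.ofReal_mul (by positivity), ENNReal.ofReal_natCast, ofReal_measureReal]
  refine congrArg _ (setLIntegral_congr_fun (hS.inter measurableSet_Ioi) fun t ht ↦ ?_)
  rw [← ENNReal.ofReal_mul (pow_nonneg ht.2.le _), ← Real.rpow_natCast, Nat.cast_sub hdim,
    Nat.cast_one, ← Real.rpow_add ht.2]

theorem lintegral_ball_norm_rpow_addHaar {a : ℝ} (ha : -dim E < a) {r : ℝ} (hr : 0 ≤ r) :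
    ∫⁻ x in ball 0 r, ENNReal.ofReal (‖x‖ ^ a) ∂μ = ENNReal.ofReal
      (dim E * μ.real (ball 0 1) * (r ^ (dim E + a) / (dim E + a))) := by
  have hball : ball (0 : E) r = (‖·‖) ⁻¹' Iio r := by ext; simp
  rw [hball, setLIntegral_norm_rpow_addHaar μ a measurableSet_Iio, Iio_inter_Ioi,
    lintegral_Ioo_rpow (by linarith) hr, ← ENNReal.ofReal_mul (by positivity)]
  ring_nf

theorem lintegral_compl_ball_norm_rpow_addHaar {a : ℝ} (ha : a < -dim E) {r : ℝ}
    (hr : 0 < r) :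
    ∫⁻ x in (ball 0 r)ᶜ, ENNReal.ofReal (‖x‖ ^ a) ∂μ = ENNReal.ofReal
      (dim E * μ.real (ball 0 1) * (-r ^ (dim E + a) / (dim E + a))) := by
  have hball : (ball (0 : E) r)ᶜ = (‖·‖) ⁻¹' Ici r := by ext; simp
  have hIci : Ici r ∩ Ioi 0 = Ici r := inter_eq_left.2 fun t ht ↦ hr.trans_le ht
  rw [hball, setLIntegral_norm_rpow_addHaar μ a measurableSet_Ici, hIci,
    lintegral_Ici_rpow (by linarith) hr, ← ENNReal.ofReal_mul (by positivity)]
  ring_nf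

theorem lintegral_compl_ball_one_div_measure_ball_rpow_mul_rpow {p q : ℝ}
    (hpq : dim E < q + dim E * p) {r : ℝ} (hr : 0 < r) :
    ∫⁻ y in (ball 0 r)ᶜ, 1 / (μ (ball 0 ‖y‖) ^ p * ENNReal.ofReal ‖y‖ ^ q) ∂μ =
      ENNReal.ofReal (μ.real (ball 0 1) ^ (-p) * (dim E * μ.real (ball 0 1) *
        (r ^ (-(q + dim E * p - dim E)) / (q + dim E * p - dim E)))) := by
  have hv := measureReal_ball_pos μ (0 : E) one_pos
  rw [setLIntegral_congr_fun measurableSet_ball.compl fun y hy ↦ by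
      rw [one_div_measure_ball_rpow_mul_rpow μ (hr.trans_le (by simpa using hy)),
        ENNReal.ofReal_mul (by positivity)],
    lintegral_const_mul' _ _ ENNReal.ofReal_ne_top,
    lintegral_compl_ball_norm_rpow_addHaar μ (by linarith) hr,
    ← ENNReal.ofReal_mul (by positivity),
    show (dim E : ℝ) + -(dim E * p + q) = -(q + dim E * p - dim E) by ring,
    neg_div, div_neg, neg_neg]

theorem rpow_lintegral_compl_ball_mul_rpow_lintegral_ball {p p' s : ℝ}
    (hpp' : p.HolderConjugate p') (hsp : dim E < s * p) {r : ℝ} (hr : 0 < r) :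
    (∫⁻ y in (ball 0 r)ᶜ, 1 / (μ (ball 0 ‖y‖) ^ p * ENNReal.ofReal ‖y‖ ^ (s * p)) ∂μ)
          ^ (1 / p) *
        (∫⁻ y in ball 0 r, ENNReal.ofReal ‖y‖ ^ (s * p') ∂μ) ^ (1 / p') =
      ENNReal.ofReal (dim E * (p - 1) ^ (1 / p') /
        (s * p + dim E * p - dim E)) := by
  have hn : 0 < (dim E : ℝ) := Nat.cast_pos.2 finrank_pos
  have hv := measureReal_ball_pos μ (0 : E) one_pos
  have hp := hpp'.pos
  have hp1 := hpp'.sub_one_pos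
  have hs : 0 < s := pos_of_mul_pos_left (hn.trans hsp) hp.le
  have hsp' : 0 < s * p' := mul_pos hs hpp'.symm.pos
  have hp' : p' = p / (p - 1) := hpp'.conjugate_eq
  have hT : 0 < s * p + dim E * p - dim E := by nlinarith
  have hball : ∫⁻ y in ball 0 r, ENNReal.ofReal ‖y‖ ^ (s * p') ∂μ =
      ENNReal.ofReal (dim E * μ.real (ball 0 1) *
        (r ^ (dim E + s * p') / (dim E + s * p'))) := by
    rw [setLIntegral_congr_fun measurableSet_ball fun y _ ↦
        ENNReal.ofReal_rpow_of_nonneg (norm_nonneg y) hsp'.le,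
      lintegral_ball_norm_rpow_addHaar μ (by linarith) hr.le]
  have hexp : (dim E : ℝ) + s * p' = (s * p + dim E * p - dim E) / (p - 1) := by
    rw [hp']; field_simp; ring
  rw [lintegral_compl_ball_one_div_measure_ball_rpow_mul_rpow μ (by linarith) hr, hball, hexp,
    show 1 / p' = (p - 1) / p by rw [hp', one_div_div],
    ENNReal.ofReal_rpow_of_nonneg (by positivity) (by positivity),
    ENNReal.ofReal_rpow_of_nonneg (by positivity) (by positivity),
    ← ENNReal.ofReal_mul (by positivity)]
  exact congrArg _ (hardy_radial_product_eq hn hv hr hpp'.lt hT)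

end HaarMeasure

open MeasureTheory Metric ENNReal

theorem fractional_hardy_constant_evaluation_general
    (N : ℕ) (hN : 1 ≤ N) (p p' s : ℝ) (hp : 1 < p)
    (hsp : (N : ℝ) < s * p) (hp' : p' = p / (p - 1)) :
    (⨆ x : {x : EuclideanSpace ℝ (Fin N) // x ≠ 0},
        (∫⁻ y in (ball (0 : EuclideanSpace ℝ (Fin N)) ‖x.1‖)ᶜ,
            1 / (volume (ball (0 : EuclideanSpace ℝ (Fin N)) ‖y‖) ^ p *
              ENNReal.ofReal ‖y‖ ^ (s * p))) ^ (1 / p) *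
        (∫⁻ y in ball (0 : EuclideanSpace ℝ (Fin N)) ‖x.1‖,
            ENNReal.ofReal ‖y‖ ^ (s * p')) ^ (1 / p'))
      = ENNReal.ofReal ((N : ℝ) * (p - 1) ^ (1 / p') / (s * p + N * p - N)) ∧
    (N : ℝ) * (p - 1) ^ (1 / p') / (s * p + N * p - N) * (p' ^ (1 / p') * p ^ (1 / p))
      = (N : ℝ) * p / (s * p + N * p - N) ∧
    (N : ℝ) * p / (s * p + N * p - N) < 1 := by
  have hpp' : p.HolderConjugate p' := (Real.holderConjugate_iff_eq_conjExponent hp).2 hp'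
  have hT : 0 < s * p + N * p - N := by nlinarith
  have : Nontrivial (EuclideanSpace ℝ (Fin N)) :=
    nontrivial_of_finrank_pos (by rw [finrank_euclideanSpace_fin]; omega)
  have : Nonempty {x : EuclideanSpace ℝ (Fin N) // x ≠ 0} :=
    (exists_ne 0).elim fun x hx ↦ ⟨⟨x, hx⟩⟩
  refine ⟨?_, ?_, (div_lt_one hT).2 (by linarith)⟩
  · have h := fun x : {x : EuclideanSpace ℝ (Fin N) // x ≠ 0} ↦
      rpow_lintegral_compl_ball_mul_rpow_lintegral_ball volume hpp'
        (by rwa [finrank_euclideanSpace_fin]) (norm_pos_iff.2 x.2)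
    simp only [finrank_euclideanSpace_fin] at h
    rw [iSup_congr h, iSup_const]
  · rw [div_mul_eq_mul_div, mul_assoc, hpp'.sub_one_rpow_mul_rpow_mul_rpow]

/-- explicit evaluation of the constant D₁ in the fractional Hardy
inequality with a ≡ 1 on ℝ^N, for the range sp > N; in particular multiplying
it by (p')^{1/p'} p^{1/p} gives Np/(sp+Np−N) < 1. -/
theorem fractional_hardy_constant_evaluation
    (N : ℕ) (hN : 1 ≤ N) (p p' s : ℝ) (hp : 1 < p) (hs : 0 < s)
    (hsp : (N : ℝ) < s * p) (hp' : p' = p / (p - 1)) :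
    (⨆ x : {x : EuclideanSpace ℝ (Fin N) // x ≠ 0},
        (∫⁻ y in (ball (0 : EuclideanSpace ℝ (Fin N)) ‖x.1‖)ᶜ,
            1 / (volume (ball (0 : EuclideanSpace ℝ (Fin N)) ‖y‖) ^ p *
              ENNReal.ofReal ‖y‖ ^ (s * p))) ^ (1 / p) *
        (∫⁻ y in ball (0 : EuclideanSpace ℝ (Fin N)) ‖x.1‖,
            ENNReal.ofReal ‖y‖ ^ (s * p')) ^ (1 / p'))
      = ENNReal.ofReal ((N : ℝ) * (p - 1) ^ (1 / p') / (s * p + N * p - N)) ∧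
    (N : ℝ) * (p - 1) ^ (1 / p') / (s * p + N * p - N) * (p' ^ (1 / p') * p ^ (1 / p))
      = (N : ℝ) * p / (s * p + N * p - N) ∧
    (N : ℝ) * p / (s * p + N * p - N) < 1 :=
  fractional_hardy_constant_evaluation_general N hN p p' s hp hsp hp'
end

section
/- Let N ≥ 1 and 1 < p < q < ∞. Let u ∈ L^p(ℝ^N) ∩ L^q(ℝ^N) with u not identically zero. Then ∫_{ℝ^N} ( |u(x)|^p / ‖u‖_{L^p}^p ) log( |u(x)|^p / ‖u‖_{L^p}^p ) dx ≤ ( q/(q−p) ) log( ‖u‖_{L^q}^p / ‖u‖_{L^p}^p ). -/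
/-!
With `a = q / p > 1`, the function `f = |u|^p / ‖u‖_p^p` is a probability density, and
`log y ≤ y - 1` at `y = f^(a-1) / H` gives pointwise `(a - 1) f log f ≤ f log H - f + f^a / H`.
Integrating with `H = ∫ f^a = ‖u‖_q^q / ‖u‖_p^q` yields `(a - 1) ∫ f log f ≤ log H`, which is the
claim. The same bound with `H = 1` makes the positive part of `f log f` integrable, so the entropy
is a well-defined element of `[-∞, ∞)`.
-/

open MeasureTheory ENNReal

lemma Real.sub_one_mul_mul_log_le {a H t : ℝ} (hH : 0 < H) (ht : 0 ≤ t) :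
    (a - 1) * (t * Real.log t) ≤ t * Real.log H - t + t ^ a / H := by
  rcases ht.eq_or_lt with rfl | ht
  · simpa using div_nonneg (Real.rpow_nonneg le_rfl a) hH.le
  have hlog := Real.log_le_sub_one_of_pos (by positivity : 0 < t ^ (a - 1) / H)
  rw [Real.log_div (by positivity) hH.ne', Real.log_rpow ht] at hlog
  have hpow : t * t ^ (a - 1) = t ^ a := by
    conv_rhs => rw [← add_sub_cancel 1 a, Real.rpow_add ht, Real.rpow_one]
  have := mul_le_mul_of_nonneg_left hlog ht.le
  rw [mul_sub, mul_sub, mul_div_assoc', hpow, mul_one] at this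
  linarith

section

variable {α : Type*} [MeasurableSpace α] {μ : Measure α}

lemma integrable_of_lintegral_ofReal_ne_top {φ : α → ℝ} (hφ : AEStronglyMeasurable φ μ)
    (hpos : ∫⁻ x, ENNReal.ofReal (φ x) ∂μ ≠ ∞) (hneg : ∫⁻ x, ENNReal.ofReal (-φ x) ∂μ ≠ ∞) :
    Integrable φ μ := by
  have hzero : AEStronglyMeasurable (fun _ ↦ (0 : ℝ)) μ := aestronglyMeasurable_const
  have hposPart : Integrable (fun x ↦ max (φ x) 0) μ :=
    (lintegral_ofReal_ne_top_iff_integrable (hφ.sup hzero)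
      (ae_of_all _ fun _ ↦ le_max_right _ _)).1 (by simpa using hpos)
  have hnegPart : Integrable (fun x ↦ max (-φ x) 0) μ :=
    (lintegral_ofReal_ne_top_iff_integrable (hφ.neg.sup hzero)
      (ae_of_all _ fun _ ↦ le_max_right _ _)).1 (by simpa using hneg)
  exact (hposPart.sub hnegPart).congr
    (ae_of_all _ fun x ↦ max_zero_sub_max_neg_zero_eq_self (φ x))

lemma coe_lintegral_ofReal_sub_coe_lintegral_ofReal_neg_le {φ : α → ℝ} {c : ℝ}
    (hφ : AEStronglyMeasurable φ μ) (hpos : ∫⁻ x, ENNReal.ofReal (φ x) ∂μ ≠ ∞)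
    (hc : Integrable φ μ → ∫ x, φ x ∂μ ≤ c) :
    ((∫⁻ x, ENNReal.ofReal (φ x) ∂μ : ℝ≥0∞) : EReal)
      - ((∫⁻ x, ENNReal.ofReal (-φ x) ∂μ : ℝ≥0∞) : EReal) ≤ c := by
  by_cases hneg : ∫⁻ x, ENNReal.ofReal (-φ x) ∂μ = ∞
  · simp [hneg, EReal.sub_top]
  have hφi := integrable_of_lintegral_ofReal_ne_top hφ hpos hneg
  rw [← EReal.coe_ennreal_toReal hpos, ← EReal.coe_ennreal_toReal hneg, ← EReal.coe_sub,
    EReal.coe_le_coe_iff, ← integral_eq_lintegral_pos_part_sub_lintegral_neg_part hφi]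
  exact hc hφi

variable {f : α → ℝ} {a : ℝ}

lemma lintegral_ofReal_mul_log_ne_top (ha : 1 < a) (hf : 0 ≤ f)
    (hfa : Integrable (fun x ↦ f x ^ a) μ) :
    ∫⁻ x, ENNReal.ofReal (f x * Real.log (f x)) ∂μ ≠ ∞ := by
  have hbound : ∀ x, f x * Real.log (f x) ≤ f x ^ a / (a - 1) := fun x ↦ by
    have := Real.sub_one_mul_mul_log_le (a := a) one_pos (hf x)
    rw [Real.log_one, mul_zero, div_one] at this
    rw [le_div_iff₀ (by linarith), mul_comm]
    linarith [show 0 ≤ f x from hf x]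
  refine ne_top_of_le_ne_top ?_ (lintegral_mono fun x ↦ ENNReal.ofReal_le_ofReal (hbound x))
  rw [← ofReal_integral_eq_lintegral_ofReal (hfa.div_const _)
    (ae_of_all _ fun x ↦ div_nonneg (Real.rpow_nonneg (hf x) a) (by linarith))]
  exact ENNReal.ofReal_ne_top

lemma integral_rpow_pos (ha : a ≠ 0) (hf : 0 ≤ f) (hf_int : Integrable f μ)
    (hpos : 0 < ∫ x, f x ∂μ) (hfa : Integrable (fun x ↦ f x ^ a) μ) :
    0 < ∫ x, f x ^ a ∂μ := by
  have hsupp : Function.support (fun x ↦ f x ^ a) = Function.support f := by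
    ext x
    simp [Real.rpow_eq_zero (hf x) ha]
  rw [integral_pos_iff_support_of_nonneg hf hf_int] at hpos
  rwa [integral_pos_iff_support_of_nonneg (fun x ↦ Real.rpow_nonneg (hf x) a) hfa, hsupp]

theorem integral_mul_log_le_log_integral_rpow_div (ha : 1 < a) (hf : 0 ≤ f)
    (hf_int : Integrable f μ) (hf1 : ∫ x, f x ∂μ = 1) (hfa : Integrable (fun x ↦ f x ^ a) μ)
    (hent : Integrable (fun x ↦ f x * Real.log (f x)) μ) :
    ∫ x, f x * Real.log (f x) ∂μ ≤ Real.log (∫ x, f x ^ a ∂μ) / (a - 1) := by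
  set H := ∫ x, f x ^ a ∂μ
  have hH : 0 < H := integral_rpow_pos (by linarith) hf hf_int (hf1 ▸ one_pos) hfa
  have hlin : Integrable (fun x ↦ f x * Real.log H - f x) μ := (hf_int.mul_const _).sub hf_int
  have hrhs : ∫ x, (f x * Real.log H - f x + f x ^ a / H) ∂μ = Real.log H := by
    rw [integral_add hlin (hfa.div_const _),
      integral_sub (hf_int.mul_const _) hf_int, integral_mul_const, integral_div, hf1,
      div_self hH.ne']
    ring
  rw [le_div_iff₀ (by linarith), mul_comm, ← integral_const_mul, ← hrhs]
  exact integral_mono (hent.const_mul _) (hlin.add (hfa.div_const _))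
    fun x ↦ Real.sub_one_mul_mul_log_le hH (hf x)

theorem coe_lintegral_mul_log_sub_le (ha : 1 < a) (hf : 0 ≤ f) (hf_int : Integrable f μ)
    (hf1 : ∫ x, f x ∂μ = 1) (hfa : Integrable (fun x ↦ f x ^ a) μ) :
    ((∫⁻ x, ENNReal.ofReal (f x * Real.log (f x)) ∂μ : ℝ≥0∞) : EReal)
      - ((∫⁻ x, ENNReal.ofReal (-(f x * Real.log (f x))) ∂μ : ℝ≥0∞) : EReal)
      ≤ ((Real.log (∫ x, f x ^ a ∂μ) / (a - 1) : ℝ) : EReal) :=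
  coe_lintegral_ofReal_sub_coe_lintegral_ofReal_neg_le
    (hf_int.1.mul
      (Real.measurable_log.comp_aemeasurable hf_int.1.aemeasurable).aestronglyMeasurable)
    (lintegral_ofReal_mul_log_ne_top ha hf hfa)
    (integral_mul_log_le_log_integral_rpow_div ha hf hf_int hf1 hfa)

lemma MeasureTheory.MemLp.integrable_norm_rpow_of_ofReal {E : Type*} [NormedAddCommGroup E]
    {u : α → E} {p : ℝ} (hp : 0 < p) (hu : MemLp u (ENNReal.ofReal p) μ) :
    Integrable (fun x ↦ ‖u x‖ ^ p) μ := by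
  simpa [ENNReal.toReal_ofReal hp.le] using
    hu.integrable_norm_rpow (by simpa using hp) ENNReal.ofReal_ne_top

lemma integral_norm_rpow_pos {E : Type*} [NormedAddCommGroup E] {u : α → E} {p : ℝ}
    (hp : p ≠ 0) (hu : Integrable (fun x ↦ ‖u x‖ ^ p) μ) (hu0 : ¬ u =ᵐ[μ] 0) :
    0 < ∫ x, ‖u x‖ ^ p ∂μ := by
  have hsupp : Function.support (fun x ↦ ‖u x‖ ^ p) = Function.support u := by
    ext x
    simp [Real.rpow_eq_zero (norm_nonneg _) hp]
  rw [integral_pos_iff_support_of_nonneg (fun x ↦ Real.rpow_nonneg (norm_nonneg _) p) hu, hsupp,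
    pos_iff_ne_zero]
  exact (Measure.measure_support_eq_zero_iff μ).not.2 hu0

end

theorem logarithmic_holder_inequality_general
    (N : ℕ) (p q : ℝ) (hp : 1 < p) (hpq : p < q)
    (u : EuclideanSpace ℝ (Fin N) → ℂ)
    (hup : MemLp u (ENNReal.ofReal p) volume)
    (huq : MemLp u (ENNReal.ofReal q) volume)
    (hu0 : ¬ u =ᵐ[volume] 0)
    (Ip Iq : ℝ)
    (hIp : Ip = ∫ x, ‖u x‖ ^ p) (hIq : Iq = ∫ x, ‖u x‖ ^ q) :
    ((∫⁻ x, ENNReal.ofReal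
        ((‖u x‖ ^ p / Ip) * Real.log (‖u x‖ ^ p / Ip)) : ℝ≥0∞) : EReal)
      - ((∫⁻ x, ENNReal.ofReal
        (-((‖u x‖ ^ p / Ip) * Real.log (‖u x‖ ^ p / Ip))) : ℝ≥0∞) : EReal)
      ≤ (((q / (q - p)) * Real.log (Iq ^ (p / q) / Ip) : ℝ) : EReal) := by
  have hp0 : 0 < p := by linarith
  have hq0 : 0 < q := by linarith
  have hup_int := hup.integrable_norm_rpow_of_ofReal hp0
  have huq_int := huq.integrable_norm_rpow_of_ofReal hq0
  have hIp_pos : 0 < Ip := hIp ▸ integral_norm_rpow_pos hp0.ne' hup_int hu0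
  have hIq_pos : 0 < Iq := hIq ▸ integral_norm_rpow_pos hq0.ne' huq_int hu0
  have hpow (x) : (‖u x‖ ^ p / Ip) ^ (q / p) = ‖u x‖ ^ q / Ip ^ (q / p) := by
    rw [Real.div_rpow (by positivity) hIp_pos.le, ← Real.rpow_mul (norm_nonneg _),
      mul_div_cancel₀ _ hp0.ne']
  refine (coe_lintegral_mul_log_sub_le (f := fun x ↦ ‖u x‖ ^ p / Ip) ((one_lt_div hp0).2 hpq)
    (fun x ↦ by positivity) (hup_int.div_const _)
    (by rw [integral_div, ← hIp, div_self hIp_pos.ne'])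
    (by simpa only [hpow] using huq_int.div_const _)).trans_eq ?_
  rw [EReal.coe_eq_coe_iff]
  simp only [hpow]
  rw [integral_div, ← hIq, Real.log_div hIq_pos.ne' (by positivity), Real.log_rpow hIp_pos,
    Real.log_div (by positivity) hIp_pos.ne', Real.log_rpow hIq_pos]
  field_simp

/-- logarithmic Hölder inequality on ℝ^N.  The entropy integral
on the left-hand side (which may a priori be −∞) is encoded in `EReal` as the
difference of the lower integrals of the positive and negative parts of the
integrand. -/
theorem logarithmic_holder_inequality
    (N : ℕ) (hN : 1 ≤ N) (p q : ℝ) (hp : 1 < p) (hpq : p < q)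
    (u : EuclideanSpace ℝ (Fin N) → ℂ)
    (hup : MemLp u (ENNReal.ofReal p) volume)
    (huq : MemLp u (ENNReal.ofReal q) volume)
    (hu0 : ¬ u =ᵐ[volume] 0)
    (Ip Iq : ℝ)
    (hIp : Ip = ∫ x, ‖u x‖ ^ p) (hIq : Iq = ∫ x, ‖u x‖ ^ q) :
    ((∫⁻ x, ENNReal.ofReal
        ((‖u x‖ ^ p / Ip) * Real.log (‖u x‖ ^ p / Ip)) : ℝ≥0∞) : EReal)
      - ((∫⁻ x, ENNReal.ofReal
        (-((‖u x‖ ^ p / Ip) * Real.log (‖u x‖ ^ p / Ip))) : ℝ≥0∞) : EReal)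
      ≤ (((q / (q - p)) * Real.log (Iq ^ (p / q) / Ip) : ℝ) : EReal) :=
  logarithmic_holder_inequality_general N p q hp hpq u hup huq hu0 Ip Iq hIp hIq
end

section
/- Let N ≥ 1, p > 1, and s ∈ ℝ with s > −N/p. Let a : ℝ^N × ℝ^N → [0,∞) be a measurable function, and define A(x) = ( (1/|B(0,|x|)|) ∫_{B(0,|x|)} a(x,y)^{1−p'} dy )^{1−p}. Then for every measurable u : ℝ^N → ℂ, ∫_{ℝ^N} ( A(x)/|x|^{sp} ) | u(x) − (1/|B(0,|x|)|) ∫_{B(0,|x|)} u(y) dy |^p dx ≤ 2^{N+sp} (N/|𝔖|) ∫_{ℝ^N} ∫_{ℝ^N} |u(x) − u(y)|^p / |x−y|^{N+sp} · a(x,y) dx dy. -/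
/-!
Fix `x ≠ 0` and let `B` be the ball of radius `|x|` about the origin. The deviation of `u x` from
the average of `u` over `B` is at most the average of `|u x - u y|` over `B`. Hölder's inequality
with the weight `a(x, ·)` bounds the `p`-th power of that average by the average of
`|u x - u y|^p a(x, y)` times exactly the reciprocal of `A(x)`. Finally `|B| = |x|^N |B(0,1)|` and
`|x - y| ≤ 2|x|` on `B` turn `|B|⁻¹ |x|^{-sp}` into at most `2^{N+sp} |x - y|^{-(N+sp)} / |B(0,1)|`;
integrating in `x` gives the estimate.
-/

open MeasureTheory Metric ENNReal Module

namespace ENNReal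

variable {α : Type*} [MeasurableSpace α] {μ : Measure α} {p q : ℝ}

theorem lintegral_rpow_le_lintegral_rpow_mul_mul_lintegral_rpow (hpq : p.HolderConjugate q)
    {f w : α → ℝ≥0∞} (hf : AEMeasurable f μ) (hw : AEMeasurable w μ)
    (hw_ne_zero : ∀ᵐ y ∂μ, w y ≠ 0) (hw_ne_top : ∀ᵐ y ∂μ, w y ≠ ∞) :
    (∫⁻ y, f y ∂μ) ^ p ≤ (∫⁻ y, f y ^ p * w y ∂μ) * (∫⁻ y, w y ^ (1 - q) ∂μ) ^ (p - 1) := by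
  have hfactor : (fun y ↦ f y) =ᵐ[μ]
      (fun y ↦ (f y ^ p * w y) ^ p⁻¹) * fun y ↦ (w y ^ (1 - q)) ^ q⁻¹ := by
    filter_upwards [hw_ne_zero, hw_ne_top] with y h0 htop
    have hexp : p⁻¹ + (1 - q) * q⁻¹ = 0 := by
      rw [sub_mul, one_mul, mul_inv_cancel₀ hpq.symm.ne_zero]
      linarith [hpq.inv_add_inv_eq_one]
    rw [Pi.mul_apply, mul_rpow_of_nonneg _ _ (inv_nonneg.2 hpq.nonneg), ← rpow_mul, ← rpow_mul,
      mul_inv_cancel₀ hpq.ne_zero, rpow_one, mul_assoc, ← rpow_add _ _ h0 htop, hexp, rpow_zero,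
      mul_one]
  have hholder := lintegral_mul_le_Lp_mul_Lq μ hpq
    (((hf.pow_const p).mul hw).pow_const p⁻¹) ((hw.pow_const (1 - q)).pow_const q⁻¹)
  simp only [Pi.mul_apply, one_div, rpow_inv_rpow hpq.ne_zero, rpow_inv_rpow hpq.symm.ne_zero]
    at hholder
  calc (∫⁻ y, f y ∂μ) ^ p
      ≤ ((∫⁻ y, f y ^ p * w y ∂μ) ^ p⁻¹ * (∫⁻ y, w y ^ (1 - q) ∂μ) ^ q⁻¹) ^ p := by
        rw [lintegral_congr_ae hfactor]
        exact rpow_le_rpow hholder hpq.nonneg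
    _ = (∫⁻ y, f y ^ p * w y ∂μ) * (∫⁻ y, w y ^ (1 - q) ∂μ) ^ (p - 1) := by
        rw [mul_rpow_of_nonneg _ _ hpq.nonneg, ← rpow_mul, ← rpow_mul, inv_mul_cancel₀ hpq.ne_zero,
          rpow_one, ← div_eq_inv_mul, hpq.div_conj_eq_sub_one]

theorem lintegral_rpow_one_sub_rpow_mul_rpow_lintegral_le (hpq : p.HolderConjugate q)
    {f w : α → ℝ≥0∞} (hf : AEMeasurable f μ) (hw : AEMeasurable w μ)
    (hw_ne_top : ∀ᵐ y ∂μ, w y ≠ ∞) :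
    (∫⁻ y, w y ^ (1 - q) ∂μ) ^ (1 - p) * (∫⁻ y, f y ∂μ) ^ p ≤ ∫⁻ y, f y ^ p * w y ∂μ := by
  have hq : 1 - q < 0 := by linarith [hpq.symm.lt]
  have hp : 1 - p < 0 := by linarith [hpq.lt]
  set I := ∫⁻ y, w y ^ (1 - q) ∂μ
  rcases eq_or_ne I ∞ with hI_top | hI_top
  · simp [hI_top, top_rpow_of_neg hp]
  rcases eq_or_ne I 0 with hI_zero | hI_zero
  · -- `w ^ (1 - q)` vanishes only where `w = ∞`
    have hμ : μ = 0 := by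
      have hw_top : w ^ (1 - q) =ᵐ[μ] 0 := (lintegral_eq_zero_iff' (hw.pow_const _)).1 hI_zero
      refine ae_eq_bot.1 (Filter.eventually_false_iff_eq_bot.1 ?_)
      filter_upwards [hw_top, hw_ne_top] with y hy htop
      simp [rpow_eq_zero_iff, hq.not_gt, htop] at hy
    rw [hμ, lintegral_zero_measure, zero_rpow_of_pos hpq.pos, mul_zero]
    exact zero_le
  have hw_ne_zero : ∀ᵐ y ∂μ, w y ≠ 0 := by
    filter_upwards [ae_lt_top' (hw.pow_const _) hI_top] with y hy h0
    simp [h0, zero_rpow_of_neg hq] at hy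
  calc I ^ (1 - p) * (∫⁻ y, f y ∂μ) ^ p
      ≤ I ^ (1 - p) * ((∫⁻ y, f y ^ p * w y ∂μ) * I ^ (p - 1)) := by
        gcongr
        exact lintegral_rpow_le_lintegral_rpow_mul_mul_lintegral_rpow hpq hf hw hw_ne_zero hw_ne_top
    _ = ∫⁻ y, f y ^ p * w y ∂μ := by
        rw [mul_left_comm, ← rpow_add _ _ hI_zero hI_top]
        simp

end ENNReal

section

variable {α F : Type*} [MeasurableSpace α] [NormedAddCommGroup F] [NormedSpace ℝ F]
  [CompleteSpace F]

theorem enorm_sub_integral_le_lintegral_enorm_sub {ν : Measure α} [IsProbabilityMeasure ν]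
    {f : α → F} (hf : AEStronglyMeasurable f ν) (c : F) :
    ‖c - ∫ y, f y ∂ν‖ₑ ≤ ∫⁻ y, ‖c - f y‖ₑ ∂ν := by
  by_cases hfi : Integrable f ν
  · calc ‖c - ∫ y, f y ∂ν‖ₑ = ‖∫ y, (c - f y) ∂ν‖ₑ := by
          rw [integral_sub (integrable_const c) hfi, integral_const, probReal_univ, one_smul]
      _ ≤ ∫⁻ y, ‖c - f y‖ₑ ∂ν := enorm_integral_le_lintegral_enorm _
  · suffices ∫⁻ y, ‖c - f y‖ₑ ∂ν = ∞ by simp [this]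
    by_contra hfin
    have hcf : Integrable (fun y ↦ c - f y) ν :=
      ⟨aestronglyMeasurable_const.sub hf, hasFiniteIntegral_iff_enorm.2 (lt_top_iff_ne_top.2 hfin)⟩
    exact hfi (((integrable_const c).sub hcf).congr (ae_of_all _ fun y ↦ sub_sub_cancel c (f y)))

theorem enorm_rpow_neg_le_two_rpow_div {E : Type*} [SeminormedAddCommGroup E] {x y : E}
    (h : ‖y‖ ≤ ‖x‖) {e : ℝ} (he : 0 ≤ e) :
    ‖x‖ₑ ^ (-e) ≤ 2 ^ e / ‖x - y‖ₑ ^ e := by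
  have hxy : ‖x - y‖ₑ ≤ 2 * ‖x‖ₑ := by
    rw [two_mul]
    exact enorm_sub_le.trans (add_le_add_right (enorm_le_iff_norm_le.2 h) _)
  have h2_ne_zero : (2 : ℝ≥0∞) ^ e ≠ 0 := (rpow_pos two_pos ofNat_ne_top).ne'
  have h2_ne_top : (2 : ℝ≥0∞) ^ e ≠ ∞ := rpow_ne_top_of_nonneg he ofNat_ne_top
  calc ‖x‖ₑ ^ (-e) = 2 ^ e / (2 * ‖x‖ₑ) ^ e := by
        rw [mul_rpow_of_nonneg _ _ he, div_eq_mul_inv, ENNReal.mul_inv (.inl h2_ne_zero)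
          (.inl h2_ne_top), ← mul_assoc, ENNReal.mul_inv_cancel h2_ne_zero h2_ne_top, one_mul,
          rpow_neg]
    _ ≤ 2 ^ e / ‖x - y‖ₑ ^ e := ENNReal.div_le_div_left (rpow_le_rpow hxy he) _

variable {E : Type*} [NormedAddCommGroup E] [NormedSpace ℝ E] [MeasurableSpace E] [BorelSpace E]
  [FiniteDimensional ℝ E] (μ : Measure E) [μ.IsAddHaarMeasure]

theorem inv_addHaar_ball_norm_div_rpow {x : E} (hx : x ≠ 0) (t : ℝ) :
    (μ (ball 0 ‖x‖))⁻¹ / ‖x‖ₑ ^ t = ‖x‖ₑ ^ (-(finrank ℝ E + t)) / μ (ball 0 1) := by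
  have hx0 : ‖x‖ₑ ≠ 0 := enorm_ne_zero.2 hx
  have hxtop : ‖x‖ₑ ≠ ∞ := enorm_ne_top
  rw [Measure.addHaar_ball_of_pos μ 0 (norm_pos_iff.2 hx), ofReal_pow (norm_nonneg x), ofReal_norm,
    rpow_neg, rpow_add _ _ hx0 hxtop, rpow_natCast,
    ENNReal.mul_inv (.inl (pow_ne_zero _ hx0)) (.inl (pow_ne_top hxtop)),
    ENNReal.mul_inv (.inl (pow_ne_zero _ hx0)) (.inl (pow_ne_top hxtop))]
  simp only [div_eq_mul_inv]
  ring

theorem weighted_enorm_sub_setAverage_rpow_le {p q s : ℝ} (hpq : p.HolderConjugate q)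
    (he : 0 ≤ finrank ℝ E + s * p) {w : E → ℝ≥0∞} (hw : AEMeasurable w μ)
    (hw_ne_top : ∀ᵐ y ∂μ, w y ≠ ∞) {u : E → F} (hu : AEStronglyMeasurable u μ) {x : E}
    (hx : x ≠ 0) :
    ((μ (ball 0 ‖x‖))⁻¹ * ∫⁻ y in ball 0 ‖x‖, w y ^ (1 - q) ∂μ) ^ (1 - p) / ‖x‖ₑ ^ (s * p) *
        ‖u x - ⨍ y in ball 0 ‖x‖, u y ∂μ‖ₑ ^ p
      ≤ 2 ^ (finrank ℝ E + s * p) / μ (ball 0 1) *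
        ∫⁻ y, ‖u x - u y‖ₑ ^ p / ‖x - y‖ₑ ^ (finrank ℝ E + s * p) * w y ∂μ := by
  set e : ℝ := finrank ℝ E + s * p
  set B := ball (0 : E) ‖x‖
  have hB_ne_zero : μ B ≠ 0 := (measure_ball_pos μ 0 (norm_pos_iff.2 hx)).ne'
  have hB_ne_top : μ B ≠ ∞ := measure_ball_lt_top.ne
  -- averages over `B` are integrals against this probability measure
  set ν := (μ B)⁻¹ • μ.restrict B
  have : IsProbabilityMeasure ν :=
    ProbabilityTheory.cond_isProbabilityMeasure_of_finite hB_ne_zero hB_ne_top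
  have hν : ν ≪ μ := Measure.smul_absolutelyContinuous.trans Measure.absolutelyContinuous_restrict
  have hν_lintegral (g : E → ℝ≥0∞) : ∫⁻ y, g y ∂ν = (μ B)⁻¹ * ∫⁻ y in B, g y ∂μ :=
    lintegral_smul_measure _ _
  have hf : AEMeasurable (fun y ↦ ‖u x - u y‖ₑ) ν :=
    (aestronglyMeasurable_const.sub (hu.mono_ac hν)).enorm
  have hkernel : ∀ y ∈ B, ‖x‖ₑ ^ (-e) * (‖u x - u y‖ₑ ^ p * w y)
      ≤ 2 ^ e * (‖u x - u y‖ₑ ^ p / ‖x - y‖ₑ ^ e * w y) := by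
    intro y hy
    calc ‖x‖ₑ ^ (-e) * (‖u x - u y‖ₑ ^ p * w y)
        ≤ 2 ^ e / ‖x - y‖ₑ ^ e * (‖u x - u y‖ₑ ^ p * w y) := by
          gcongr
          exact enorm_rpow_neg_le_two_rpow_div (mem_ball_zero_iff.1 hy).le he
      _ = 2 ^ e * (‖u x - u y‖ₑ ^ p / ‖x - y‖ₑ ^ e * w y) := by
          simp only [div_eq_mul_inv]
          ring
  calc ((μ B)⁻¹ * ∫⁻ y in B, w y ^ (1 - q) ∂μ) ^ (1 - p) / ‖x‖ₑ ^ (s * p) *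
        ‖u x - ⨍ y in B, u y ∂μ‖ₑ ^ p
      ≤ (‖x‖ₑ ^ (s * p))⁻¹ * ((∫⁻ y, w y ^ (1 - q) ∂ν) ^ (1 - p) *
          (∫⁻ y, ‖u x - u y‖ₑ ∂ν) ^ p) := by
        rw [hν_lintegral, div_eq_mul_inv, mul_comm _ (_⁻¹), mul_assoc, setAverage_eq']
        gcongr _ * (_ * ?_ ^ _)
        · exact hpq.nonneg
        exact enorm_sub_integral_le_lintegral_enorm_sub (hu.mono_ac hν) _
    _ ≤ (‖x‖ₑ ^ (s * p))⁻¹ * ∫⁻ y, ‖u x - u y‖ₑ ^ p * w y ∂ν := by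
        gcongr
        exact lintegral_rpow_one_sub_rpow_mul_rpow_lintegral_le hpq hf (hw.mono_ac hν)
          (hν.ae_le hw_ne_top)
    _ = (μ (ball 0 1))⁻¹ * (‖x‖ₑ ^ (-e) * ∫⁻ y in B, ‖u x - u y‖ₑ ^ p * w y ∂μ) := by
        rw [hν_lintegral, ← mul_assoc, mul_comm _ (μ B)⁻¹, ← div_eq_mul_inv,
          inv_addHaar_ball_norm_div_rpow μ hx, div_eq_mul_inv]
        ring
    _ ≤ (μ (ball 0 1))⁻¹ * ∫⁻ y in B, ‖x‖ₑ ^ (-e) * (‖u x - u y‖ₑ ^ p * w y) ∂μ := by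
        gcongr
        exact lintegral_const_mul_le _ _
    _ ≤ (μ (ball 0 1))⁻¹ * ∫⁻ y, 2 ^ e * (‖u x - u y‖ₑ ^ p / ‖x - y‖ₑ ^ e * w y) ∂μ := by
        gcongr _ * ?_
        exact (setLIntegral_mono' measurableSet_ball hkernel).trans (setLIntegral_le_lintegral _ _)
    _ = 2 ^ e / μ (ball 0 1) * ∫⁻ y, ‖u x - u y‖ₑ ^ p / ‖x - y‖ₑ ^ e * w y ∂μ := by
        rw [lintegral_const_mul' _ _ (rpow_ne_top_of_nonneg he ofNat_ne_top), div_eq_mul_inv]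
        ring

end

theorem fractional_hardy_J1_estimate_general
    (N : ℕ) (hN : 1 ≤ N) (p p' s S : ℝ) (hp : 1 < p) (hs : -(N / p) < s)
    (hp' : p' = p / (p - 1))
    (hS : ENNReal.ofReal S = N * volume (ball (0 : EuclideanSpace ℝ (Fin N)) 1))
    (a : EuclideanSpace ℝ (Fin N) → EuclideanSpace ℝ (Fin N) → ℝ)
    (ha_meas : Measurable (Function.uncurry a))
    (A : EuclideanSpace ℝ (Fin N) → ℝ≥0∞)
    (hA : ∀ x, A x = ((volume (ball (0 : EuclideanSpace ℝ (Fin N)) ‖x‖))⁻¹ *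
        ∫⁻ y in ball (0 : EuclideanSpace ℝ (Fin N)) ‖x‖,
          ENNReal.ofReal (a x y) ^ (1 - p')) ^ (1 - p))
    (u : EuclideanSpace ℝ (Fin N) → ℂ) (hu : Measurable u) :
    (∫⁻ x, A x / ENNReal.ofReal ‖x‖ ^ (s * p) *
        ENNReal.ofReal ‖u x -
          ((volume (ball (0 : EuclideanSpace ℝ (Fin N)) ‖x‖)).toReal)⁻¹ •
            ∫ y in ball (0 : EuclideanSpace ℝ (Fin N)) ‖x‖, u y‖ ^ p)
      ≤ ENNReal.ofReal ((2 : ℝ) ^ ((N : ℝ) + s * p) * ((N : ℝ) / S)) *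
        ∫⁻ x, ∫⁻ y,
          ENNReal.ofReal ‖u x - u y‖ ^ p /
            ENNReal.ofReal ‖x - y‖ ^ ((N : ℝ) + s * p) *
            ENNReal.ofReal (a x y) := by
  have : Nontrivial (EuclideanSpace ℝ (Fin N)) := by
    have : Nonempty (Fin N) := ⟨⟨0, hN⟩⟩
    infer_instance
  have hpq : p.HolderConjugate p' := (Real.holderConjugate_iff_eq_conjExponent hp).2 hp'
  have he : 0 ≤ (N : ℝ) + s * p := by
    have := (div_lt_iff₀ (zero_lt_one.trans hp)).1 (neg_div p (N : ℝ) ▸ hs)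
    linarith
  have hN0 : (N : ℝ≥0∞) ≠ 0 := by exact_mod_cast (zero_lt_one.trans_le hN).ne'
  have hS_pos : 0 < S :=
    ENNReal.ofReal_pos.1 (hS ▸ ENNReal.mul_pos hN0 (measure_ball_pos _ _ one_pos).ne')
  have hconst : ENNReal.ofReal ((2 : ℝ) ^ ((N : ℝ) + s * p) * ((N : ℝ) / S))
      = 2 ^ ((N : ℝ) + s * p) / volume (ball (0 : EuclideanSpace ℝ (Fin N)) 1) := by
    rw [ENNReal.ofReal_mul (by positivity), ENNReal.ofReal_div_of_pos hS_pos, hS,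
      ← ENNReal.ofReal_rpow_of_pos two_pos, ENNReal.ofReal_ofNat, ENNReal.ofReal_natCast,
      div_eq_mul_inv, ENNReal.mul_inv (.inl hN0) (.inl (natCast_ne_top N)), ← mul_assoc (N : ℝ≥0∞),
      ENNReal.mul_inv_cancel hN0 (natCast_ne_top N), one_mul, div_eq_mul_inv]
  calc _ ≤ ∫⁻ x, ENNReal.ofReal ((2 : ℝ) ^ ((N : ℝ) + s * p) * ((N : ℝ) / S)) *
          ∫⁻ y, ENNReal.ofReal ‖u x - u y‖ ^ p /
            ENNReal.ofReal ‖x - y‖ ^ ((N : ℝ) + s * p) * ENNReal.ofReal (a x y) := by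
        refine lintegral_mono_ae ?_
        filter_upwards [Measure.ae_ne volume 0] with x hx
        have := weighted_enorm_sub_setAverage_rpow_le volume hpq (by simpa using he)
          (ha_meas.of_uncurry_left (x := x)).ennreal_ofReal.aemeasurable
          (ae_of_all _ fun _ ↦ ofReal_ne_top) hu.aestronglyMeasurable hx
        simpa [hA x, hconst, setAverage_eq, measureReal_def] using this
    _ = _ := lintegral_const_mul' _ _ ofReal_ne_top

/-- the key intermediate estimate (bound on the term J₁) in the
proof of the fractional Hardy inequality, on ℝ^N (Euclidean case of homogeneous
Lie groups, Q = N, triangle constant C = 1).  Here S = |𝔖| is the surface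
measure of the unit sphere, so that |B(0,r)| = S rᴺ / N. -/
theorem fractional_hardy_J1_estimate
    (N : ℕ) (hN : 1 ≤ N) (p p' s S : ℝ) (hp : 1 < p) (hs : -(N / p) < s)
    (hp' : p' = p / (p - 1))
    (hS : ENNReal.ofReal S = N * volume (ball (0 : EuclideanSpace ℝ (Fin N)) 1))
    (a : EuclideanSpace ℝ (Fin N) → EuclideanSpace ℝ (Fin N) → ℝ)
    (ha_meas : Measurable (Function.uncurry a)) (ha_nonneg : ∀ x y, 0 ≤ a x y)
    (A : EuclideanSpace ℝ (Fin N) → ℝ≥0∞)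
    (hA : ∀ x, A x = ((volume (ball (0 : EuclideanSpace ℝ (Fin N)) ‖x‖))⁻¹ *
        ∫⁻ y in ball (0 : EuclideanSpace ℝ (Fin N)) ‖x‖,
          ENNReal.ofReal (a x y) ^ (1 - p')) ^ (1 - p))
    (u : EuclideanSpace ℝ (Fin N) → ℂ) (hu : Measurable u) :
    (∫⁻ x, A x / ENNReal.ofReal ‖x‖ ^ (s * p) *
        ENNReal.ofReal ‖u x -
          ((volume (ball (0 : EuclideanSpace ℝ (Fin N)) ‖x‖)).toReal)⁻¹ •
            ∫ y in ball (0 : EuclideanSpace ℝ (Fin N)) ‖x‖, u y‖ ^ p)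
      ≤ ENNReal.ofReal ((2 : ℝ) ^ ((N : ℝ) + s * p) * ((N : ℝ) / S)) *
        ∫⁻ x, ∫⁻ y,
          ENNReal.ofReal ‖u x - u y‖ ^ p /
            ENNReal.ofReal ‖x - y‖ ^ ((N : ℝ) + s * p) *
            ENNReal.ofReal (a x y) :=
  fractional_hardy_J1_estimate_general N hN p p' s S hp hs hp' hS a ha_meas A hA u hu
end
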